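/- Let S be a finite set of size k and V ⊇ S of size n, and for u ∈ S, v ∈ V∖S let A^u, A^v ∈ {±1}^n. Suppose B ⊆ S is such that ⟨A^u, A^v⟩ ≥ k/2 for all u ∈ B, and suppose ‖Σ_{u∈B} A^u_{V∖S}‖₂ ≤ C√n·√|B| and |⟨Σ_{u∈B} A^u_S, A^v_S⟩| ≤ |B|·k/4. Then |B| ≤ 16C²·n²/k². -/

import Mathlib

/-!
Summing the hypothesis `⟨A^u, A^v⟩ ≥ k/2` over `u ∈ B` gives `|B| k / 2 ≤ ∑_{u ∈ B} ⟨A^u, A^v⟩`.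
Splitting the coordinates into `S` and `V ∖ S`, the `S`-part is at most `|B| k / 4` by assumption,
and Cauchy–Schwarz bounds the `V ∖ S`-part by `‖∑_{u ∈ B} A^u_{V∖S}‖₂ ‖A^v‖₂ ≤ C n √|B|`.
Hence `|B| k ≤ 4 C n √|B|`, i.e. `√|B| k ≤ 4 C n`, and squaring gives the bound.
-/

open Finset

theorem sum_mul_le_sqrt_sum_sq_mul_sqrt_card {ι : Type*} (s : Finset ι) (x y : ι → ℝ)
    (hy : ∀ i ∈ s, |y i| ≤ 1) :
    ∑ i ∈ s, x i * y i ≤ √(∑ i ∈ s, x i ^ 2) * √(#s : ℝ) := by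
  have hy_sq : ∑ i ∈ s, y i ^ 2 ≤ #s := by
    simpa using sum_le_sum fun i hi => (sq_le_one_iff_abs_le_one (y i)).mpr (hy i hi)
  calc ∑ i ∈ s, x i * y i ≤ √(∑ i ∈ s, x i ^ 2) * √(∑ i ∈ s, y i ^ 2) :=
        Real.sum_mul_le_sqrt_mul_sqrt s x y
    _ ≤ √(∑ i ∈ s, x i ^ 2) * √(#s : ℝ) := by gcongr

theorem le_sq_div_sq_of_mul_le_mul_sqrt {m k D : ℝ} (hm : 0 ≤ m) (hk : 0 < k)
    (h : m * k ≤ D * √m) : m ≤ D ^ 2 / k ^ 2 := by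
  rcases hm.eq_or_lt with rfl | hm_pos
  · positivity
  have hsqrt_pos : 0 < √m := Real.sqrt_pos.mpr hm_pos
  have hsq : √m * √m = m := Real.mul_self_sqrt hm
  have hlin : √m * k ≤ D := by
    refine le_of_mul_le_mul_left ?_ hsqrt_pos
    rw [← mul_assoc, hsq]
    linarith
  rw [le_div_iff₀ (by positivity)]
  calc m * k ^ 2 = (√m * k) ^ 2 := by rw [mul_pow, Real.sq_sqrt hm]
    _ ≤ D ^ 2 := pow_le_pow_left₀ (by positivity) hlin 2

theorem stmt_14_general {V : Type*} [Fintype V] [DecidableEq V] (S : Finset V) (k n : ℕ)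
    (hkpos : 0 < k) (hn : Fintype.card V = n)
    (A : V → V → ℝ) (v : V) (C : ℝ)
    (hval : ∀ u w, A u w = 1 ∨ A u w = -1)
    (B : Finset V)
    (hinner : ∀ u ∈ B, (k : ℝ)/2 ≤ ∑ w, A u w * A v w)
    (hnorm : Real.sqrt (∑ w ∈ Finset.univ \ S, (∑ u ∈ B, A u w)^2) ≤
      C * Real.sqrt n * Real.sqrt B.card)
    (hboring : |∑ w ∈ S, (∑ u ∈ B, A u w) * A v w| ≤ (B.card : ℝ) * k / 4) :
    (B.card : ℝ) ≤ 16 * C^2 * n^2 / k^2 := by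
  have hlower : #B • ((k : ℝ) / 2) ≤ ∑ u ∈ B, ∑ w, A u w * A v w := card_nsmul_le_sum _ _ _ hinner
  have hsplit : ∑ u ∈ B, ∑ w, A u w * A v w =
      ∑ w ∈ univ \ S, (∑ u ∈ B, A u w) * A v w + ∑ w ∈ S, (∑ u ∈ B, A u w) * A v w := by
    simp only [sum_comm (s := B), ← sum_mul]
    exact (sum_sdiff (subset_univ S)).symm
  have houtside : ∑ w ∈ univ \ S, (∑ u ∈ B, A u w) * A v w ≤ C * n * √(#B : ℝ) := by
    have hcard : √(#(univ \ S) : ℝ) ≤ √n := by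
      gcongr; exact_mod_cast hn ▸ card_le_univ _
    have hsign : ∀ w ∈ univ \ S, |A v w| ≤ 1 := fun w _ => by rcases hval v w with h | h <;> simp [h]
    calc _ ≤ √(∑ w ∈ univ \ S, (∑ u ∈ B, A u w) ^ 2) * √(#(univ \ S) : ℝ) :=
          sum_mul_le_sqrt_sum_sq_mul_sqrt_card _ _ _ hsign
      _ ≤ (C * √n * √(#B : ℝ)) * √n := by gcongr; exact (Real.sqrt_nonneg _).trans hnorm
      _ = C * n * √(#B : ℝ) := by rw [mul_right_comm, mul_assoc C, Real.mul_self_sqrt n.cast_nonneg]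
  have hkey : (#B : ℝ) * k ≤ 4 * C * n * √(#B : ℝ) := by
    rw [nsmul_eq_mul] at hlower
    linarith [(abs_le.mp hboring).2]
  calc (#B : ℝ) ≤ (4 * C * n) ^ 2 / k ^ 2 :=
        le_sq_div_sq_of_mul_le_mul_sqrt (by positivity) (by exact_mod_cast hkpos) hkey
    _ = 16 * C ^ 2 * n ^ 2 / k ^ 2 := by ring

/-- Abstracted spectral argument for the simple inner-product algorithm:
if every `u ∈ B` has `⟨A^u, A^v⟩ ≥ k/2`, the restricted column sums satisfy
`‖∑_{u∈B} A^u_{V∖S}‖₂ ≤ C√n√|B|`, and the boring part is at most `|B|k/4`,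
then `|B| ≤ 16C²n²/k²`. -/
theorem stmt_14 {V : Type*} [Fintype V] [DecidableEq V] (S : Finset V) (k n : ℕ)
    (hk : S.card = k) (hkpos : 0 < k) (hn : Fintype.card V = n)
    (A : V → V → ℝ) (v : V) (hv : v ∉ S) (C : ℝ) (hC : 0 ≤ C)
    (hval : ∀ u w, A u w = 1 ∨ A u w = -1)
    (B : Finset V) (hBS : B ⊆ S)
    (hinner : ∀ u ∈ B, (k : ℝ)/2 ≤ ∑ w, A u w * A v w)
    (hnorm : Real.sqrt (∑ w ∈ Finset.univ \ S, (∑ u ∈ B, A u w)^2) ≤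
      C * Real.sqrt n * Real.sqrt B.card)
    (hboring : |∑ w ∈ S, (∑ u ∈ B, A u w) * A v w| ≤ (B.card : ℝ) * k / 4) :
    (B.card : ℝ) ≤ 16 * C^2 * n^2 / k^2 :=
  stmt_14_general S k n hkpos hn A v C hval B hinner hnorm hboring
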